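/- arXiv:2502.15608 — 3 statements merged into one kernel-verified Lean document; each statement's English description precedes it below -/
import Mathlib

section
/- For the sequences N_Γ(n), N_Ω(n) defined by N_Γ(0)=1, N_Ω(0)=0 and the recurrence (N_Γ, N_Ω) ↦ (N_Γ+N_Ω, 6N_Γ+7N_Ω), the ratio N_Ω(n)/N_Γ(n) converges to 3 + √15 as n → ∞. -/
/-- For the sequences N_Γ(0)=1, N_Ω(0)=0 with recurrence
(N_Γ, N_Ω) ↦ (N_Γ+N_Ω, 6N_Γ+7N_Ω), the ratio N_Ω(n)/N_Γ(n) converges to 3+√15. -/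
theorem ratio_tendsto (NΓ NΩ : ℕ → ℝ)
    (h0Γ : NΓ 0 = 1) (h0Ω : NΩ 0 = 0)
    (hΓ : ∀ n, NΓ (n + 1) = NΓ n + NΩ n)
    (hΩ : ∀ n, NΩ (n + 1) = 6 * NΓ n + 7 * NΩ n) :
    Filter.Tendsto (fun n => NΩ n / NΓ n) Filter.atTop (nhds (3 + Real.sqrt 15)) := by
  have hs : Real.sqrt 15 * Real.sqrt 15 = 15 := Real.mul_self_sqrt (by norm_num)
  have hlt : Real.sqrt 15 < 4 := by nlinarith [Real.sqrt_nonneg 15]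
  have hgt : 3 < Real.sqrt 15 := by nlinarith [Real.sqrt_nonneg 15]
  set L : ℝ := 3 + Real.sqrt 15 with hL
  set c : ℝ := 4 - Real.sqrt 15 with hc
  have hc0 : 0 < c := by simp only [hc]; linarith
  have hc1 : c < 1 := by simp only [hc]; linarith
  have hL0 : 0 ≤ L := by simp only [hL]; linarith
  have hpos : ∀ n, 1 ≤ NΓ n ∧ 0 ≤ NΩ n := by
    intro n
    induction n with
    | zero => simp [h0Γ, h0Ω]
    | succ n ih =>
      refine ⟨?_, ?_⟩
      · rw [hΓ]; linarith [ih.1, ih.2]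
      · rw [hΩ]; linarith [ih.1, ih.2]
  have key : ∀ n, |NΩ n / NΓ n - L| ≤ c ^ n * L := by
    intro n
    induction n with
    | zero => simp [h0Γ, h0Ω, abs_of_nonneg hL0]
    | succ n ih =>
      have hΓn := (hpos n).1
      have hΓn1 := (hpos (n + 1)).1
      have hΓpos : (0:ℝ) < NΓ n := by linarith
      have hΓ1pos : (0:ℝ) < NΓ (n + 1) := by linarith
      have hmono : NΓ n ≤ NΓ (n + 1) := by
        rw [hΓ]; linarith [(hpos n).2]
      have hnum : NΩ (n + 1) - L * NΓ (n + 1) = c * (NΩ n - L * NΓ n) := by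
        rw [hΩ, hΓ]
        simp only [hL, hc]
        ring_nf
        nlinarith [hs]
      have e1 : NΩ (n + 1) / NΓ (n + 1) - L
          = (NΩ (n + 1) - L * NΓ (n + 1)) / NΓ (n + 1) := by
        field_simp
      have e2 : NΩ n / NΓ n - L = (NΩ n - L * NΓ n) / NΓ n := by
        field_simp
      rw [e1, hnum, abs_div, abs_mul, abs_of_pos hΓ1pos, abs_of_pos hc0]
      have h1 : c * |NΩ n - L * NΓ n| / NΓ (n + 1)
          ≤ c * |NΩ n - L * NΓ n| / NΓ n := by
        apply div_le_div_of_nonneg_left _ hΓpos hmono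
        positivity
      refine h1.trans ?_
      have e3 : |NΩ n - L * NΓ n| / NΓ n = |NΩ n / NΓ n - L| := by
        rw [e2, abs_div, abs_of_pos hΓpos]
      rw [mul_div_assoc, e3, pow_succ, mul_comm (c ^ n) c, mul_assoc]
      exact mul_le_mul_of_nonneg_left ih hc0.le
  rw [← tendsto_sub_nhds_zero_iff]
  apply squeeze_zero_norm (fun n => key n)
  simpa using (tendsto_pow_atTop_nhds_zero_of_lt_one hc0.le hc1).mul_const L
end

section
/- The 12×12 metatile inflation matrix M_{Γ,Ω} (defined below) has Perron eigenvalue 4 + √15. -/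
/-- The 12×12 metatile inflation matrix M_{Γ,Ω}. -/
def MGO : Matrix (Fin 12) (Fin 12) ℝ :=
  Matrix.of
  ![![1, 0, 0, 0, 0, 0, 1, 0, 0, 0, 0, 0],
   ![0, 1, 0, 0, 0, 0, 0, 1, 0, 0, 0, 0],
   ![0, 0, 1, 0, 0, 0, 0, 0, 1, 0, 0, 0],
   ![0, 0, 0, 1, 0, 0, 0, 0, 0, 1, 0, 0],
   ![0, 0, 0, 0, 1, 0, 0, 0, 0, 0, 1, 0],
   ![0, 0, 0, 0, 0, 1, 0, 0, 0, 0, 0, 1],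
   ![1, 2, 1, 0, 1, 1, 1, 2, 1, 0, 1, 2],
   ![1, 1, 2, 1, 0, 1, 2, 1, 2, 1, 0, 1],
   ![1, 1, 1, 2, 1, 0, 1, 2, 1, 2, 1, 0],
   ![0, 1, 1, 1, 2, 1, 0, 1, 2, 1, 2, 1],
   ![1, 0, 1, 1, 1, 2, 1, 0, 1, 2, 1, 2],
   ![2, 1, 0, 1, 1, 1, 2, 1, 0, 1, 2, 1]]

/-- The Perron eigenvector of M_{Γ,Ω}. -/
noncomputable def pv : Fin 12 → ℝ :=
  ![1, 1, 1, 1, 1, 1, 3 + Real.sqrt 15, 3 + Real.sqrt 15, 3 + Real.sqrt 15,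
    3 + Real.sqrt 15, 3 + Real.sqrt 15, 3 + Real.sqrt 15]

lemma pv0 : pv 0 = 1 := rfl
lemma pv1 : pv 1 = 1 := rfl
lemma pv2 : pv 2 = 1 := rfl
lemma pv3 : pv 3 = 1 := rfl
lemma pv4 : pv 4 = 1 := rfl
lemma pv5 : pv 5 = 1 := rfl
lemma pv6 : pv 6 = 3 + Real.sqrt 15 := rfl
lemma pv7 : pv 7 = 3 + Real.sqrt 15 := rfl
lemma pv8 : pv 8 = 3 + Real.sqrt 15 := rfl
lemma pv9 : pv 9 = 3 + Real.sqrt 15 := rfl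
lemma pv10 : pv 10 = 3 + Real.sqrt 15 := rfl
lemma pv11 : pv 11 = 3 + Real.sqrt 15 := rfl

lemma pv_pos : ∀ j, 0 < pv j := by
  have hs : (0:ℝ) ≤ Real.sqrt 15 := Real.sqrt_nonneg 15
  intro j
  fin_cases j <;>
    first
      | (show (0:ℝ) < 1; norm_num)
      | (show (0:ℝ) < 3 + Real.sqrt 15; linarith)

lemma MGO_nonneg : ∀ i j, 0 ≤ MGO i j := by
  intro i j
  fin_cases i <;> fin_cases j <;> norm_num [MGO]

set_option maxHeartbeats 2000000 in
lemma MGO_mulVec_pv : MGO.mulVec pv = (4 + Real.sqrt 15) • pv := by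
  have h : Real.sqrt 15 * Real.sqrt 15 = 15 :=
    Real.mul_self_sqrt (by norm_num)
  have r0 : MGO 0 = ![1, 0, 0, 0, 0, 0, 1, 0, 0, 0, 0, 0] := rfl
  have r1 : MGO 1 = ![0, 1, 0, 0, 0, 0, 0, 1, 0, 0, 0, 0] := rfl
  have r2 : MGO 2 = ![0, 0, 1, 0, 0, 0, 0, 0, 1, 0, 0, 0] := rfl
  have r3 : MGO 3 = ![0, 0, 0, 1, 0, 0, 0, 0, 0, 1, 0, 0] := rfl
  have r4 : MGO 4 = ![0, 0, 0, 0, 1, 0, 0, 0, 0, 0, 1, 0] := rfl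
  have r5 : MGO 5 = ![0, 0, 0, 0, 0, 1, 0, 0, 0, 0, 0, 1] := rfl
  have r6 : MGO 6 = ![1, 2, 1, 0, 1, 1, 1, 2, 1, 0, 1, 2] := rfl
  have r7 : MGO 7 = ![1, 1, 2, 1, 0, 1, 2, 1, 2, 1, 0, 1] := rfl
  have r8 : MGO 8 = ![1, 1, 1, 2, 1, 0, 1, 2, 1, 2, 1, 0] := rfl
  have r9 : MGO 9 = ![0, 1, 1, 1, 2, 1, 0, 1, 2, 1, 2, 1] := rfl
  have r10 : MGO 10 = ![1, 0, 1, 1, 1, 2, 1, 0, 1, 2, 1, 2] := rfl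
  have r11 : MGO 11 = ![2, 1, 0, 1, 1, 1, 2, 1, 0, 1, 2, 1] := rfl
  have q0 : (![1, 1, 1, 1, 1, 1, 3 + Real.sqrt 15, 3 + Real.sqrt 15, 3 + Real.sqrt 15, 3 + Real.sqrt 15, 3 + Real.sqrt 15, 3 + Real.sqrt 15] : Fin 12 → ℝ) 0 = 1 := rfl
  have q1 : (![1, 1, 1, 1, 1, 1, 3 + Real.sqrt 15, 3 + Real.sqrt 15, 3 + Real.sqrt 15, 3 + Real.sqrt 15, 3 + Real.sqrt 15, 3 + Real.sqrt 15] : Fin 12 → ℝ) 1 = 1 := rfl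
  have q2 : (![1, 1, 1, 1, 1, 1, 3 + Real.sqrt 15, 3 + Real.sqrt 15, 3 + Real.sqrt 15, 3 + Real.sqrt 15, 3 + Real.sqrt 15, 3 + Real.sqrt 15] : Fin 12 → ℝ) 2 = 1 := rfl
  have q3 : (![1, 1, 1, 1, 1, 1, 3 + Real.sqrt 15, 3 + Real.sqrt 15, 3 + Real.sqrt 15, 3 + Real.sqrt 15, 3 + Real.sqrt 15, 3 + Real.sqrt 15] : Fin 12 → ℝ) 3 = 1 := rfl
  have q4 : (![1, 1, 1, 1, 1, 1, 3 + Real.sqrt 15, 3 + Real.sqrt 15, 3 + Real.sqrt 15, 3 + Real.sqrt 15, 3 + Real.sqrt 15, 3 + Real.sqrt 15] : Fin 12 → ℝ) 4 = 1 := rfl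
  have q5 : (![1, 1, 1, 1, 1, 1, 3 + Real.sqrt 15, 3 + Real.sqrt 15, 3 + Real.sqrt 15, 3 + Real.sqrt 15, 3 + Real.sqrt 15, 3 + Real.sqrt 15] : Fin 12 → ℝ) 5 = 1 := rfl
  have q6 : (![1, 1, 1, 1, 1, 1, 3 + Real.sqrt 15, 3 + Real.sqrt 15, 3 + Real.sqrt 15, 3 + Real.sqrt 15, 3 + Real.sqrt 15, 3 + Real.sqrt 15] : Fin 12 → ℝ) 6 = 3 + Real.sqrt 15 := rfl
  have q7 : (![1, 1, 1, 1, 1, 1, 3 + Real.sqrt 15, 3 + Real.sqrt 15, 3 + Real.sqrt 15, 3 + Real.sqrt 15, 3 + Real.sqrt 15, 3 + Real.sqrt 15] : Fin 12 → ℝ) 7 = 3 + Real.sqrt 15 := rfl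
  have q8 : (![1, 1, 1, 1, 1, 1, 3 + Real.sqrt 15, 3 + Real.sqrt 15, 3 + Real.sqrt 15, 3 + Real.sqrt 15, 3 + Real.sqrt 15, 3 + Real.sqrt 15] : Fin 12 → ℝ) 8 = 3 + Real.sqrt 15 := rfl
  have q9 : (![1, 1, 1, 1, 1, 1, 3 + Real.sqrt 15, 3 + Real.sqrt 15, 3 + Real.sqrt 15, 3 + Real.sqrt 15, 3 + Real.sqrt 15, 3 + Real.sqrt 15] : Fin 12 → ℝ) 9 = 3 + Real.sqrt 15 := rfl
  have q10 : (![1, 1, 1, 1, 1, 1, 3 + Real.sqrt 15, 3 + Real.sqrt 15, 3 + Real.sqrt 15, 3 + Real.sqrt 15, 3 + Real.sqrt 15, 3 + Real.sqrt 15] : Fin 12 → ℝ) 10 = 3 + Real.sqrt 15 := rfl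
  have q11 : (![1, 1, 1, 1, 1, 1, 3 + Real.sqrt 15, 3 + Real.sqrt 15, 3 + Real.sqrt 15, 3 + Real.sqrt 15, 3 + Real.sqrt 15, 3 + Real.sqrt 15] : Fin 12 → ℝ) 11 = 3 + Real.sqrt 15 := rfl
  funext i
  fin_cases i <;>
    simp [Matrix.mulVec, dotProduct, Fin.sum_univ_succ, pv,
      r0, r1, r2, r3, r4, r5, r6, r7, r8, r9, r10, r11,
      q0, q1, q2, q3, q4, q5, q6, q7, q8, q9, q10, q11] <;>
    first
      | ring1
      | linear_combination -h
      | linear_combination h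
      | linear_combination 2 * h
      | linear_combination -2 * h

/-- The Perron eigenvalue of the 12×12 metatile inflation matrix M_{Γ,Ω} is 4 + √15. -/
theorem perron_MGO :
    Module.End.HasEigenvalue (Matrix.toLin' MGO) (4 + Real.sqrt 15) ∧
    ∀ μ : ℝ, Module.End.HasEigenvalue (Matrix.toLin' MGO) μ → μ ≤ 4 + Real.sqrt 15 := by
  constructor
  · apply Module.End.hasEigenvalue_of_hasEigenvector (x := pv)
    refine ⟨Module.End.mem_eigenspace_iff.2 ?_, ?_⟩
    · rw [Matrix.toLin'_apply, MGO_mulVec_pv]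
    · intro h
      have h0 := congrFun h 0
      rw [pv0] at h0
      simp at h0
  · intro μ hμ
    obtain ⟨w, hw⟩ := hμ.exists_hasEigenvector
    have hwe : MGO.mulVec w = μ • w := by
      rw [← Matrix.toLin'_apply MGO w]; exact hw.apply_eq_smul
    have hwne := hw.2
    -- pick index maximizing |w j| / pv j
    obtain ⟨i, -, hi⟩ := Finset.exists_max_image Finset.univ
      (fun j => |w j| / pv j) ⟨0, Finset.mem_univ 0⟩
    have hi' : ∀ j, |w j| / pv j ≤ |w i| / pv i := fun j => hi j (Finset.mem_univ j)
    -- |w i| > 0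
    have hwi : 0 < |w i| := by
      by_contra hcon
      push_neg at hcon
      have hwi0 : |w i| / pv i ≤ 0 :=
        div_nonpos_of_nonpos_of_nonneg hcon (pv_pos i).le
      apply hwne
      funext j
      have hle : |w j| / pv j ≤ 0 := (hi' j).trans hwi0
      have hge : 0 ≤ |w j| / pv j := div_nonneg (abs_nonneg _) (pv_pos j).le
      have h0 : |w j| / pv j = 0 := le_antisymm hle hge
      have := (div_eq_zero_iff.1 h0).resolve_right (pv_pos j).ne'
      simpa using abs_eq_zero.1 this
    -- |w j| ≤ (|w i| / pv i) * pv j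
    have hbound : ∀ j, |w j| ≤ |w i| / pv i * pv j := by
      intro j
      have h := hi' j
      rw [div_le_div_iff₀ (pv_pos j) (pv_pos i)] at h
      rw [div_mul_eq_mul_div, le_div_iff₀ (pv_pos i)]
      nlinarith [pv_pos i, pv_pos j]
    -- eigen equation at i
    have h1 : μ * w i = ∑ j, MGO i j * w j := by
      have h := congrFun hwe i
      simp only [Matrix.mulVec, dotProduct, Pi.smul_apply, smul_eq_mul] at h
      rw [← h]
    have h2 : ∑ j, MGO i j * pv j = (4 + Real.sqrt 15) * pv i := by
      have h := congrFun MGO_mulVec_pv i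
      simpa only [Matrix.mulVec, dotProduct, Pi.smul_apply, smul_eq_mul] using h
    have hpi : pv i ≠ 0 := (pv_pos i).ne'
    have h3 : |μ| * |w i| ≤ (4 + Real.sqrt 15) * |w i| := by
      calc |μ| * |w i| = |μ * w i| := (abs_mul μ (w i)).symm
      _ = |∑ j, MGO i j * w j| := by rw [h1]
      _ ≤ ∑ j, |MGO i j * w j| := Finset.abs_sum_le_sum_abs _ _
      _ = ∑ j, MGO i j * |w j| := by
          refine Finset.sum_congr rfl fun j _ => ?_
          rw [abs_mul, abs_of_nonneg (MGO_nonneg i j)]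
      _ ≤ ∑ j, MGO i j * (|w i| / pv i * pv j) :=
          Finset.sum_le_sum fun j _ =>
            mul_le_mul_of_nonneg_left (hbound j) (MGO_nonneg i j)
      _ = |w i| / pv i * ∑ j, MGO i j * pv j := by
          rw [Finset.mul_sum]; refine Finset.sum_congr rfl fun j _ => by ring
      _ = |w i| / pv i * ((4 + Real.sqrt 15) * pv i) := by rw [h2]
      _ = (4 + Real.sqrt 15) * |w i| := by
          field_simp
    have hfin := le_of_mul_le_mul_right h3 hwi
    calc μ ≤ |μ| := le_abs_self μ
    _ ≤ 4 + Real.sqrt 15 := hfin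
end

section
/- For the eigenvector v = (4−√15, 1, 4−√15, 1, …, 4−√15, 1) of M_mono with eigenvalue 4+√15, the ratio of the sum of even-indexed coordinates to the sum of odd-indexed coordinates equals 4 + √15; i.e., in the infinite tiling, even-orientation monotiles outnumber odd-orientation monotiles by the factor 4 + √15 ≈ 7.873. -/
/-- For the Perron eigenvector v = (4−√15, 1, 4−√15, 1, …, 4−√15, 1) of M_mono
(odd positions 1,3,…,11 equal 4−√15, even positions 2,4,…,12 equal 1), the ratio of the
sum of coordinates at even positions to the sum at odd positions equals 4 + √15:
even-orientation monotiles outnumber odd ones by the factor 4+√15 in the infinite tiling. -/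
theorem even_odd_ratio :
    (∑ i ∈ Finset.univ.filter (fun i : Fin 12 => (i : ℕ) % 2 = 1),
        (if (i : ℕ) % 2 = 0 then 4 - Real.sqrt 15 else 1)) /
      (∑ i ∈ Finset.univ.filter (fun i : Fin 12 => (i : ℕ) % 2 = 0),
        (if (i : ℕ) % 2 = 0 then 4 - Real.sqrt 15 else 1)) = 4 + Real.sqrt 15 := by
  have h15 : Real.sqrt 15 < 4 := by
    nlinarith [Real.sq_sqrt (by norm_num : (15:ℝ) ≥ 0), Real.sqrt_nonneg 15]
  rw [show (Finset.univ.filter (fun i : Fin 12 => (i : ℕ) % 2 = 1)) = {1,3,5,7,9,11} by decide,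
      show (Finset.univ.filter (fun i : Fin 12 => (i : ℕ) % 2 = 0)) = {0,2,4,6,8,10} by decide]
  repeat rw [Finset.sum_insert (by decide)]
  rw [Finset.sum_singleton, Finset.sum_singleton]
  simp only [show ((3:Fin 12):ℕ)%2=1 from rfl, show ((5:Fin 12):ℕ)%2=1 from rfl,
    show ((7:Fin 12):ℕ)%2=1 from rfl, show ((9:Fin 12):ℕ)%2=1 from rfl,
    show ((11:Fin 12):ℕ)%2=1 from rfl, show ((4:Fin 12):ℕ)%2=0 from rfl,
    show ((6:Fin 12):ℕ)%2=0 from rfl, show ((8:Fin 12):ℕ)%2=0 from rfl,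
    show ((10:Fin 12):ℕ)%2=0 from rfl]
  norm_num
  rw [div_eq_iff (by nlinarith)]
  nlinarith [Real.sq_sqrt (by norm_num : (15:ℝ) ≥ 0)]
end
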